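/- Let m, n, m', n' be natural numbers with m·n' − m'·n = 1, and suppose the five-term relation T_{m,n} T_{m',n'} = T_{m',n'} T_{m+m',n+n'} T_{m,n} holds in End_K(V)[[u,v]]. Then for every integer a ≥ 1, the commutator identity [R(am,an), R(m',n')] = R(m+m',n+n') ∘ R((a-1)m,(a-1)n) holds in End_K(V), where [A,B] = A∘B − B∘A. -/

import Mathlib

open Classical

/-- The generating series `T_{m,n} = Σ_{k≥0} u^{mk} v^{nk} R(mk,nk)` as a formal power
series in two commuting variables `u = X 0`, `v = X 1` with coefficients in `End_K V`:
its coefficient at the monomial `u^a v^b` is `R(a,b)` if `(a,b) = (mk,nk)` for some `k`,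
and `0` otherwise (for coprime `(m,n)` this is exactly the displayed sum). -/
noncomputable def fiveTermT {K V : Type*} [Field K] [AddCommGroup V] [Module K V]
    (R : ℕ × ℕ → Module.End K V) (m n : ℕ) :
    MvPowerSeries (Fin 2) (Module.End K V) :=
  fun d => if ∃ k : ℕ, d 0 = m * k ∧ d 1 = n * k then R (d 0, d 1) else 0

/-! The coefficient at exponent `d` of both sides of the five-term relation is computed by
listing the ways of writing `d` as a sum of lattice points on the rays spanned by
`(m,n)`, `(m',n')` and `(m+m',n+n')`. Since `(m,n)` and `(m',n')` are linearly
independent, at `d = a(m,n) + (m',n')` the left side has the single term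
`R(am,an) R(m',n')`, while the right side has exactly two, `R(m',n') R(am,an)` and
`R(m+m',n+n') R((a-1)m,(a-1)n)`; their difference is the commutator identity. -/

namespace MvPowerSeries

variable {σ S : Type*} [Semiring S]

theorem coeff_mul_eq_sum_of_forall_mem (f g : MvPowerSeries σ S) {d : σ →₀ ℕ}
    (s : Finset ((σ →₀ ℕ) × (σ →₀ ℕ))) (hs : ∀ p ∈ s, p.1 + p.2 = d)
    (h : ∀ x y, x + y = d → coeff x f ≠ 0 → coeff y g ≠ 0 → (x, y) ∈ s) :
    coeff d (f * g) = ∑ p ∈ s, coeff p.1 f * coeff p.2 g := by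
  rw [coeff_mul]
  refine (Finset.sum_subset
    (fun p hp => Finset.HasAntidiagonal.mem_antidiagonal.2 (hs p hp)) ?_).symm
  rintro ⟨x, y⟩ hxy hnot
  by_cases hx : coeff x f = 0
  · rw [hx, zero_mul]
  by_cases hy : coeff y g = 0
  · rw [hy, mul_zero]
  exact absurd (h x y (Finset.HasAntidiagonal.mem_antidiagonal.1 hxy) hx hy) hnot

theorem exists_add_eq_of_coeff_mul_ne_zero {f g : MvPowerSeries σ S} {d : σ →₀ ℕ}
    (h : coeff d (f * g) ≠ 0) :
    ∃ x y, x + y = d ∧ coeff x f ≠ 0 ∧ coeff y g ≠ 0 := by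
  rw [coeff_mul] at h
  obtain ⟨⟨x, y⟩, hxy, hne⟩ := Finset.exists_ne_zero_of_sum_ne_zero h
  exact ⟨x, y, Finset.HasAntidiagonal.mem_antidiagonal.1 hxy, left_ne_zero_of_mul hne,
    right_ne_zero_of_mul hne⟩

end MvPowerSeries

open MvPowerSeries

noncomputable def uvExp (x y : ℕ) : Fin 2 →₀ ℕ := Finsupp.single 0 x + Finsupp.single 1 y

@[simp] theorem uvExp_apply_zero (x y : ℕ) : uvExp x y 0 = x := by simp [uvExp]

@[simp] theorem uvExp_apply_one (x y : ℕ) : uvExp x y 1 = y := by simp [uvExp]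

theorem eq_uvExp (d : Fin 2 →₀ ℕ) : d = uvExp (d 0) (d 1) := by
  ext i
  fin_cases i <;> simp

theorem uvExp_inj {x y x' y' : ℕ} : uvExp x y = uvExp x' y' ↔ x = x' ∧ y = y' := by
  refine ⟨fun h => ⟨?_, ?_⟩, fun ⟨hx, hy⟩ => hx ▸ hy ▸ rfl⟩
  · simpa using congrArg (· 0) h
  · simpa using congrArg (· 1) h

theorem uvExp_add (x y x' y' : ℕ) : uvExp x y + uvExp x' y' = uvExp (x + x') (y + y') := by
  simp only [uvExp, Finsupp.single_add]
  abel

theorem nsmul_uvExp (k x y : ℕ) : k • uvExp x y = uvExp (k * x) (k * y) := by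
  simp [uvExp, Finsupp.smul_single]

theorem eq_of_nsmul_add_nsmul_uvExp_eq {m n m' n' k j k' j' : ℕ} (hdet : m * n' ≠ m' * n)
    (h : k • uvExp m n + j • uvExp m' n' = k' • uvExp m n + j' • uvExp m' n') :
    k = k' ∧ j = j' := by
  simp only [nsmul_uvExp, uvExp_add, uvExp_inj] at h
  obtain ⟨h0, h1⟩ := h
  have h0' : (k * m + j * m' : ℤ) = k' * m + j' * m' := by exact_mod_cast h0
  have h1' : (k * n + j * n' : ℤ) = k' * n + j' * n' := by exact_mod_cast h1
  have hdet' : (m * n' - m' * n : ℤ) ≠ 0 := sub_ne_zero.2 (by exact_mod_cast hdet)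
  have hk : ((k : ℤ) - k') * (m * n' - m' * n) = 0 := by linear_combination n' * h0' - m' * h1'
  have hj : ((j : ℤ) - j') * (m * n' - m' * n) = 0 := by linear_combination m * h1' - n * h0'
  constructor
  · exact_mod_cast sub_eq_zero.1 ((mul_eq_zero.1 hk).resolve_right hdet')
  · exact_mod_cast sub_eq_zero.1 ((mul_eq_zero.1 hj).resolve_right hdet')

theorem eq_of_nsmul_add_nsmul_add_nsmul_uvExp_eq {m n m' n' j l k b : ℕ}
    (hdet : m * n' ≠ m' * n)
    (h : j • uvExp m' n' + (l • uvExp (m + m') (n + n') + k • uvExp m n)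
      = (b + 1) • uvExp m n + 1 • uvExp m' n') :
    (j = 0 ∧ l = 1 ∧ k = b) ∨ (j = 1 ∧ l = 0 ∧ k = b + 1) := by
  have hsum : (l + k) • uvExp m n + (j + l) • uvExp m' n'
      = (b + 1) • uvExp m n + 1 • uvExp m' n' := by
    rw [← h, ← uvExp_add]
    simp only [add_smul, smul_add]
    abel
  have := eq_of_nsmul_add_nsmul_uvExp_eq hdet hsum
  omega

section fiveTermT

variable {K V : Type*} [Field K] [AddCommGroup V] [Module K V] (R : ℕ × ℕ → Module.End K V)

theorem coeff_fiveTermT_nsmul (m n k : ℕ) :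
    coeff (k • uvExp m n) (fiveTermT R m n) = R (k * m, k * n) := by
  change ite _ _ _ = _
  rw [if_pos ⟨k, by simp [nsmul_uvExp, mul_comm]⟩]
  simp [nsmul_uvExp]

theorem exists_eq_nsmul_of_coeff_fiveTermT_ne_zero {m n : ℕ} {d : Fin 2 →₀ ℕ}
    (h : coeff d (fiveTermT R m n) ≠ 0) : ∃ k : ℕ, d = k • uvExp m n := by
  change ite _ _ _ ≠ 0 at h
  obtain ⟨k, h0, h1⟩ := (ite_ne_right_iff.1 h).1
  exact ⟨k, by rw [eq_uvExp d, h0, h1, nsmul_uvExp, mul_comm m, mul_comm n]⟩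

theorem coeff_fiveTermT_mul_fiveTermT {m n m' n' : ℕ} (hdet : m * n' ≠ m' * n) (k j : ℕ) :
    coeff (k • uvExp m n + j • uvExp m' n') (fiveTermT R m n * fiveTermT R m' n')
      = R (k * m, k * n) * R (j * m', j * n') := by
  rw [coeff_mul_eq_sum_of_forall_mem _ _ {(k • uvExp m n, j • uvExp m' n')} (by simp),
    Finset.sum_singleton, coeff_fiveTermT_nsmul, coeff_fiveTermT_nsmul]
  intro x y hxy hx hy
  obtain ⟨k', rfl⟩ := exists_eq_nsmul_of_coeff_fiveTermT_ne_zero R hx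
  obtain ⟨j', rfl⟩ := exists_eq_nsmul_of_coeff_fiveTermT_ne_zero R hy
  obtain ⟨rfl, rfl⟩ := eq_of_nsmul_add_nsmul_uvExp_eq hdet hxy
  exact Finset.mem_singleton_self _

theorem coeff_fiveTermT_mul_fiveTermT_mul_fiveTermT (hR : R (0, 0) = 1) {m n m' n' : ℕ}
    (hdet : m * n' ≠ m' * n) (b : ℕ) :
    coeff ((b + 1) • uvExp m n + 1 • uvExp m' n')
        (fiveTermT R m' n' * fiveTermT R (m + m') (n + n') * fiveTermT R m n)
      = R (m', n') * R ((b + 1) * m, (b + 1) * n)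
        + R (m + m', n + n') * R (b * m, b * n) := by
  set d := (b + 1) • uvExp m n + 1 • uvExp m' n'
  have hdet' : (m + m') * n ≠ m * (n + n') := by
    intro h; apply hdet; linarith
  have hd : d = 1 • uvExp (m + m') (n + n') + b • uvExp m n := by
    simp only [d, ← uvExp_add, add_smul, one_smul]; abel
  have hne : ((0 : Fin 2 →₀ ℕ), d) ≠ (1 • uvExp m' n', (b + 1) • uvExp m n) := by
    intro h
    have h0 : 0 • uvExp m n + 0 • uvExp m' n' = 0 • uvExp m n + 1 • uvExp m' n' := by
      simpa using congrArg Prod.fst h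
    exact absurd (eq_of_nsmul_add_nsmul_uvExp_eq hdet h0).2 zero_ne_one
  rw [mul_assoc, coeff_mul_eq_sum_of_forall_mem _ _
      {(0, d), (1 • uvExp m' n', (b + 1) • uvExp m n)} ?_ ?_, Finset.sum_pair hne]
  · rw [← zero_nsmul (uvExp m' n'), coeff_fiveTermT_nsmul, coeff_fiveTermT_nsmul, hd,
      coeff_fiveTermT_mul_fiveTermT _ hdet', ← zero_add ((b + 1) • uvExp m n),
      ← zero_nsmul (uvExp (m + m') (n + n')), coeff_fiveTermT_mul_fiveTermT _ hdet']
    simp [hR, add_comm]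
  · simp [d, add_comm]
  · intro x y hxy hx hy
    obtain ⟨j, rfl⟩ := exists_eq_nsmul_of_coeff_fiveTermT_ne_zero R hx
    obtain ⟨y₁, y₂, rfl, hy₁, hy₂⟩ := exists_add_eq_of_coeff_mul_ne_zero hy
    obtain ⟨l, rfl⟩ := exists_eq_nsmul_of_coeff_fiveTermT_ne_zero R hy₁
    obtain ⟨k, rfl⟩ := exists_eq_nsmul_of_coeff_fiveTermT_ne_zero R hy₂
    obtain ⟨rfl, rfl, rfl⟩ | ⟨rfl, rfl, rfl⟩ :=
      eq_of_nsmul_add_nsmul_add_nsmul_uvExp_eq hdet hxy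
    · rw [zero_smul, zero_add] at hxy
      rw [zero_smul, hxy]
      exact Finset.mem_insert_self _ _
    · rw [zero_smul, zero_add]
      exact Finset.mem_insert_of_mem (Finset.mem_singleton_self _)

end fiveTermT

theorem stmt_5 {K V : Type*} [Field K] [AddCommGroup V] [Module K V]
    (R : ℕ × ℕ → Module.End K V) (hR : R (0, 0) = LinearMap.id)
    (m n m' n' : ℕ) (hdet : m * n' - m' * n = 1)
    (h5 : fiveTermT R m n * fiveTermT R m' n'
        = fiveTermT R m' n' * fiveTermT R (m + m') (n + n') * fiveTermT R m n) :
    ∀ a : ℕ, 1 ≤ a →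
      R (a * m, a * n) ∘ₗ R (m', n') - R (m', n') ∘ₗ R (a * m, a * n)
        = R (m + m', n + n') ∘ₗ R ((a - 1) * m, (a - 1) * n) := by
  intro a ha
  obtain ⟨b, rfl⟩ := Nat.exists_eq_add_of_le' ha
  have hdet' : m * n' ≠ m' * n := by omega
  have h := congrArg (coeff ((b + 1) • uvExp m n + 1 • uvExp m' n')) h5
  have hR1 : R (0, 0) = 1 := hR.trans Module.End.one_eq_id.symm
  rw [coeff_fiveTermT_mul_fiveTermT R hdet',
    coeff_fiveTermT_mul_fiveTermT_mul_fiveTermT R hR1 hdet'] at h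
  simp only [one_mul] at h
  rw [Nat.add_sub_cancel, ← Module.End.mul_eq_comp, ← Module.End.mul_eq_comp,
    ← Module.End.mul_eq_comp, h, add_sub_cancel_left]
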